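/- Let X, Y be Polish spaces and let μ, ν be finitely-supported Borel probability measures on X and Y respectively, and let c : X × Y → ℝ be a real-valued cost function. A transport plan γ ∈ Π(μ,ν) is optimal for the transport problem with cost c if and only if γ is concentrated on a c-cyclically monotone set. -/

import Mathlib

open MeasureTheory

/-- A set `Γ ⊆ X × Y` is `c`-cyclically monotone for a real-valued cost. -/
def CCyclicallyMonotone {X Y : Type*} (c : X × Y → ℝ) (Γ : Set (X × Y)) : Prop :=
  ∀ (k : ℕ) (p : Fin k → X × Y), (∀ i, p i ∈ Γ) →
    ∀ σ : Equiv.Perm (Fin k),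
      ∑ i, c (p i) ≤ ∑ i, c ((p i).1, (p (σ i)).2)

/-- `γ` is a transport plan between `μ` and `ν`. -/
def IsCoupling {X Y : Type*} [MeasurableSpace X] [MeasurableSpace Y]
    (μ : Measure X) (ν : Measure Y) (γ : Measure (X × Y)) : Prop :=
  γ.map Prod.fst = μ ∧ γ.map Prod.snd = ν

/-!
Optimal implies cyclically monotone: if atoms `(xᵢ, yᵢ)` of `γ` violated the inequality for `σ`,
moving a small mass `ε` from each `(xᵢ, yᵢ)` to `(xᵢ, y_{σ i})` would keep both marginals and
lower the cost by `ε` times the violation.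

Cyclically monotone implies optimal: on the finite set `Γ ∩ (S × T)` Rockafellar's construction
(infimum of costs of re-matching along chains in `Γ`) gives potentials `φ`, `ψ` with
`φ x + ψ y ≤ c (x, y)` on `S × T` and equality on `Γ`, so for every plan `γ'`
`∫ c ∂γ = ∫ φ ∂μ + ∫ ψ ∂ν ≤ ∫ c ∂γ'`.
-/

open Set
open scoped ENNReal

section FiniteSupport

variable {α : Type*} [MeasurableSpace α] {μ : Measure α} {s : Set α}

lemma integrable_of_ae_mem_finite {E : Type*} [NormedAddCommGroup E] [MeasurableSingletonClass α]
    [IsFiniteMeasure μ] (hs : s.Finite) (hμ : ∀ᵐ x ∂μ, x ∈ s) (f : α → E) : Integrable f μ := by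
  rw [← Measure.restrict_eq_self_of_ae_mem hμ]
  exact IntegrableOn.of_finite hs

lemma ae_measure_singleton_ne_zero (hs : s.Countable) (hμ : ∀ᵐ x ∂μ, x ∈ s) :
    ∀ᵐ x ∂μ, μ {x} ≠ 0 := by
  have hnull : μ {x | x ∈ s ∧ μ {x} = 0} = 0 :=
    (measure_null_iff_singleton (hs.mono fun _ hx => hx.1)).2 fun _ hx => hx.2
  filter_upwards [hμ, measure_eq_zero_iff_ae_notMem.1 hnull] with x hxs hx
  exact fun h => hx ⟨hxs, h⟩

end FiniteSupport

section SumDirac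

variable {α ι : Type*} [MeasurableSpace α] [Fintype ι] {ε : ℝ≥0∞}

lemma map_sum_smul_dirac {β : Type*} [MeasurableSpace β] {g : α → β} (hg : Measurable g)
    (p : ι → α) : (∑ i, ε • Measure.dirac (p i)).map g = ∑ i, ε • Measure.dirac (g (p i)) := by
  rw [Measure.map_finset_sum' hg.aemeasurable]
  simp only [Measure.map_smul, Measure.map_dirac' hg]

variable [MeasurableSingletonClass α]

lemma integrable_sum_smul_dirac {E : Type*} [NormedAddCommGroup E] (hε : ε ≠ ∞) (p : ι → α)
    (f : α → E) : Integrable f (∑ i, ε • Measure.dirac (p i)) :=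
  integrable_finsetSum_measure.2 fun _ _ => (integrable_dirac enorm_lt_top).smul_measure hε

lemma integral_sum_smul_dirac {E : Type*} [NormedAddCommGroup E] [NormedSpace ℝ E]
    [CompleteSpace E] (hε : ε ≠ ∞) (p : ι → α) (f : α → E) :
    ∫ x, f x ∂(∑ i, ε • Measure.dirac (p i)) = ε.toReal • ∑ i, f (p i) := by
  rw [integral_finsetSum_measure fun i _ => (integrable_dirac enorm_lt_top).smul_measure hε,
    Finset.smul_sum]
  simp only [integral_smul_measure, integral_dirac]

lemma sum_smul_dirac_le {γ : Measure α} {p : ι → α}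
    (hε : ∀ i, Fintype.card ι * ε ≤ γ {p i}) : ∑ i, ε • Measure.dirac (p i) ≤ γ := by
  intro t
  simp only [Measure.coe_finsetSum, Finset.sum_apply, Measure.smul_apply, smul_eq_mul]
  by_cases ht : ∃ i, p i ∈ t
  · obtain ⟨i₀, hi₀⟩ := ht
    calc ∑ i, ε * Measure.dirac (p i) t ≤ ∑ _i : ι, ε :=
          Finset.sum_le_sum fun i _ => mul_le_of_le_one_right' prob_le_one
      _ = Fintype.card ι * ε := by rw [Finset.sum_const, nsmul_eq_mul, Finset.card_univ]
      _ ≤ γ {p i₀} := hε i₀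
      _ ≤ γ t := measure_mono (singleton_subset_iff.2 hi₀)
  · push Not at ht
    simp [Measure.dirac_apply, ht]

lemma exists_sum_smul_dirac_le [Nonempty ι] (γ : Measure α) [IsFiniteMeasure γ] (p : ι → α)
    (hp : ∀ i, γ {p i} ≠ 0) :
    ∃ ε : ℝ≥0∞, ε ≠ 0 ∧ ε ≠ ∞ ∧ ∑ i, ε • Measure.dirac (p i) ≤ γ := by
  obtain ⟨i₀, -, hi₀⟩ := Finset.exists_min_image Finset.univ (fun i => γ {p i}) Finset.univ_nonempty
  have hk : (Fintype.card ι : ℝ≥0∞) ≠ 0 := by simp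
  refine ⟨γ {p i₀} / Fintype.card ι, ?_, ?_, sum_smul_dirac_le fun i => ?_⟩
  · simp [ENNReal.div_eq_zero_iff, hp i₀]
  · exact ENNReal.div_ne_top (measure_ne_top _ _) hk
  · rw [ENNReal.mul_div_cancel hk (ENNReal.natCast_ne_top _)]
    exact hi₀ i (Finset.mem_univ i)

end SumDirac

namespace IsCoupling

variable {X Y : Type*} [MeasurableSpace X] [MeasurableSpace Y]
  {μ : Measure X} {ν : Measure Y} {γ : Measure (X × Y)}

lemma measure_univ_eq (h : IsCoupling μ ν γ) : γ univ = μ univ := by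
  rw [← h.1, Measure.map_apply measurable_fst MeasurableSet.univ, preimage_univ]

lemma isFiniteMeasure [IsFiniteMeasure μ] (h : IsCoupling μ ν γ) : IsFiniteMeasure γ :=
  ⟨h.measure_univ_eq ▸ measure_lt_top μ univ⟩

lemma isProbabilityMeasure [IsProbabilityMeasure μ] (h : IsCoupling μ ν γ) :
    IsProbabilityMeasure γ :=
  ⟨h.measure_univ_eq.trans measure_univ⟩

lemma ae_mem_prod (h : IsCoupling μ ν γ) {s : Set X} {t : Set Y} (hs : ∀ᵐ x ∂μ, x ∈ s)
    (ht : ∀ᵐ y ∂ν, y ∈ t) : ∀ᵐ p ∂γ, p ∈ s ×ˢ t := by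
  rw [← h.1] at hs
  rw [← h.2] at ht
  filter_upwards [ae_of_ae_map measurable_fst.aemeasurable hs,
    ae_of_ae_map measurable_snd.aemeasurable ht] with p hps hpt
  exact ⟨hps, hpt⟩

lemma add_of_marginals_eq {ρ γ₁ γ₂ : Measure (X × Y)} (h : IsCoupling μ ν (ρ + γ₁))
    (hfst : γ₁.map Prod.fst = γ₂.map Prod.fst) (hsnd : γ₁.map Prod.snd = γ₂.map Prod.snd) :
    IsCoupling μ ν (ρ + γ₂) := by
  constructor
  · rw [Measure.map_add _ _ measurable_fst, ← hfst, ← Measure.map_add _ _ measurable_fst, h.1]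
  · rw [Measure.map_add _ _ measurable_snd, ← hsnd, ← Measure.map_add _ _ measurable_snd, h.2]

lemma integrable_comp_fst (h : IsCoupling μ ν γ) {φ : X → ℝ} (hφ : Integrable φ μ) :
    Integrable (fun p => φ p.1) γ :=
  (h.1 ▸ hφ).comp_measurable measurable_fst

lemma integrable_comp_snd (h : IsCoupling μ ν γ) {ψ : Y → ℝ} (hψ : Integrable ψ ν) :
    Integrable (fun p => ψ p.2) γ :=
  (h.2 ▸ hψ).comp_measurable measurable_snd

lemma integral_fst_add_snd (h : IsCoupling μ ν γ) {φ : X → ℝ} {ψ : Y → ℝ}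
    (hφ : Integrable φ μ) (hψ : Integrable ψ ν) :
    ∫ p, φ p.1 + ψ p.2 ∂γ = ∫ x, φ x ∂μ + ∫ y, ψ y ∂ν := by
  rw [integral_add (h.integrable_comp_fst hφ) (h.integrable_comp_snd hψ), ← h.1, ← h.2,
    integral_map measurable_fst.aemeasurable (h.1 ▸ hφ).1,
    integral_map measurable_snd.aemeasurable (h.2 ▸ hψ).1]

lemma integral_le_of_potentials {γ' : Measure (X × Y)} (h : IsCoupling μ ν γ)
    (h' : IsCoupling μ ν γ') {c : X × Y → ℝ} (hc : Integrable c γ') {φ : X → ℝ} {ψ : Y → ℝ}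
    (hφ : Integrable φ μ) (hψ : Integrable ψ ν) (heq : ∀ᵐ p ∂γ, φ p.1 + ψ p.2 = c p)
    (hle : ∀ᵐ p ∂γ', φ p.1 + ψ p.2 ≤ c p) :
    ∫ p, c p ∂γ ≤ ∫ p, c p ∂γ' :=
  calc ∫ p, c p ∂γ = ∫ p, φ p.1 + ψ p.2 ∂γ := integral_congr_ae (heq.mono fun _ hp => hp.symm)
    _ = ∫ p, φ p.1 + ψ p.2 ∂γ' := by
      rw [h.integral_fst_add_snd hφ hψ, h'.integral_fst_add_snd hφ hψ]
    _ ≤ ∫ p, c p ∂γ' :=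
      integral_mono_ae ((h'.integrable_comp_fst hφ).add (h'.integrable_comp_snd hψ)) hc hle

end IsCoupling

section Optimality

variable {X Y : Type*} [MeasurableSpace X] [MeasurableSingletonClass X]
  [MeasurableSpace Y] [MeasurableSingletonClass Y]
  {μ : Measure X} {ν : Measure Y} {γ : Measure (X × Y)} {c : X × Y → ℝ}

theorem cCyclicallyMonotone_setOf_atoms_of_optimal (hγ : IsCoupling μ ν γ) [IsFiniteMeasure γ]
    (hc : Integrable c γ)
    (hopt : ∀ γ' : Measure (X × Y), IsCoupling μ ν γ' → ∫ p, c p ∂γ ≤ ∫ p, c p ∂γ') :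
    CCyclicallyMonotone c {p | γ {p} ≠ 0} := by
  intro k p hp σ
  rcases isEmpty_or_nonempty (Fin k) with hk | hk
  · simp [Finset.univ_eq_empty]
  obtain ⟨ε, hε0, hεtop, hεγ⟩ := exists_sum_smul_dirac_le γ p hp
  let q : Fin k → X × Y := fun i => ((p i).1, (p (σ i)).2)
  have := isFiniteMeasure_of_le γ hεγ
  obtain ⟨ρ, rfl⟩ : ∃ ρ, ρ + ∑ i, ε • Measure.dirac (p i) = γ :=
    ⟨_, Measure.sub_add_cancel_of_le hεγ⟩
  have hρ : Integrable c ρ := (integrable_add_measure.1 hc).1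
  have hγ' : IsCoupling μ ν (ρ + ∑ i, ε • Measure.dirac (q i)) := by
    refine hγ.add_of_marginals_eq ?_ ?_
    · simp only [map_sum_smul_dirac measurable_fst, q]
    · rw [map_sum_smul_dirac measurable_snd, map_sum_smul_dirac measurable_snd]
      exact (Equiv.sum_comp σ fun i => ε • Measure.dirac (p i).2).symm
  have hcost := hopt _ hγ'
  rw [integral_add_measure hρ (integrable_sum_smul_dirac hεtop p c),
    integral_add_measure hρ (integrable_sum_smul_dirac hεtop q c),
    integral_sum_smul_dirac hεtop, integral_sum_smul_dirac hεtop, add_le_add_iff_left,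
    smul_eq_mul, smul_eq_mul] at hcost
  exact le_of_mul_le_mul_left hcost (ENNReal.toReal_pos hε0 hεtop)

end Optimality

section Rockafellar

variable {X Y : Type*} {c : X × Y → ℝ} {Γ : Set (X × Y)}

lemma CCyclicallyMonotone.mono {Γ' : Set (X × Y)} (h : CCyclicallyMonotone c Γ) (hΓ' : Γ' ⊆ Γ) :
    CCyclicallyMonotone c Γ' :=
  fun k p hp => h k p fun i => hΓ' (hp i)

/-- The change of cost when, along the chain `f 0, …, f n`, each `(f j).2` is matched with
`(f (j + 1)).1` instead of `(f j).1`, and the last `(f n).2` with `z`. -/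
def chainCost (c : X × Y → ℝ) {n : ℕ} (f : Fin (n + 1) → X × Y) (z : X) : ℝ :=
  ∑ j : Fin n, c ((f j.succ).1, (f j.castSucc).2) + c (z, (f (Fin.last n)).2) - ∑ i, c (f i)

lemma chainCost_snoc {n : ℕ} (f : Fin (n + 1) → X × Y) (q : X × Y) (z : X) :
    chainCost c (Fin.snoc f q) z = chainCost c f q.1 + c (z, q.2) - c q := by
  simp only [chainCost, Fin.sum_univ_castSucc, Fin.snoc_castSucc, Fin.snoc_last,
    Fin.succ_castSucc, Fin.succ_last]
  ring

/-- Close the chain into a cycle. -/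
lemma CCyclicallyMonotone.le_chainCost (h : CCyclicallyMonotone c Γ) {n : ℕ}
    {f : Fin (n + 1) → X × Y} (hf : ∀ i, f i ∈ Γ) (z : X) :
    c (z, (f (Fin.last n)).2) - c ((f 0).1, (f (Fin.last n)).2) ≤ chainCost c f z := by
  have hcycle := h (n + 1) f hf (finRotate (n + 1)).symm
  have h0 : (finRotate (n + 1)).symm 0 = Fin.last n := by
    rw [Equiv.symm_apply_eq, finRotate_last]
  have hsucc (j : Fin n) : (finRotate (n + 1)).symm j.succ = j.castSucc := by
    rw [Equiv.symm_apply_eq, finRotate_apply, Fin.coeSucc_eq_succ]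
  rw [Fin.sum_univ_succ (f := fun i => c ((f i).1, (f ((finRotate (n + 1)).symm i)).2))] at hcycle
  simp only [h0, hsucc] at hcycle
  unfold chainCost
  linarith

noncomputable def rockafellarPotential (c : X × Y → ℝ) (Γ : Set (X × Y)) (z : X) : ℝ :=
  sInf {r | ∃ (n : ℕ) (f : Fin (n + 1) → X × Y), (∀ i, f i ∈ Γ) ∧ chainCost c f z = r}

lemma CCyclicallyMonotone.bddBelow_chainCost (h : CCyclicallyMonotone c Γ) (hfin : Γ.Finite)
    (z : X) :
    BddBelow {r | ∃ (n : ℕ) (f : Fin (n + 1) → X × Y), (∀ i, f i ∈ Γ) ∧ chainCost c f z = r} := by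
  obtain ⟨b, hb⟩ := (hfin.image2 (fun p q => c (z, p.2) - c (q.1, p.2)) hfin).bddBelow
  refine ⟨b, ?_⟩
  rintro _ ⟨n, f, hf, rfl⟩
  exact (hb (mem_image2_of_mem (hf _) (hf 0))).trans (h.le_chainCost hf z)

lemma CCyclicallyMonotone.rockafellarPotential_le (h : CCyclicallyMonotone c Γ)
    (hfin : Γ.Finite) {p : X × Y} (hp : p ∈ Γ) (z : X) :
    rockafellarPotential c Γ z ≤ rockafellarPotential c Γ p.1 + c (z, p.2) - c p := by
  have hchain : rockafellarPotential c Γ z - c (z, p.2) + c p ≤ rockafellarPotential c Γ p.1 := by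
    refine le_csInf ⟨_, 0, fun _ => p, fun _ => hp, rfl⟩ ?_
    rintro _ ⟨n, f, hf, rfl⟩
    have hext : rockafellarPotential c Γ z ≤ chainCost c (Fin.snoc f p) z :=
      csInf_le (h.bddBelow_chainCost hfin z)
        ⟨n + 1, Fin.snoc f p, Fin.lastCases (by simpa using hp) (by simpa using hf), rfl⟩
    rw [chainCost_snoc] at hext
    linarith
  linarith

theorem CCyclicallyMonotone.exists_potentials (h : CCyclicallyMonotone c Γ) (hfin : Γ.Finite)
    {s : Set X} (hs : s.Finite) (hΓs : ∀ p ∈ Γ, p.1 ∈ s) :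
    ∃ (φ : X → ℝ) (ψ : Y → ℝ), (∀ x ∈ s, ∀ y, φ x + ψ y ≤ c (x, y)) ∧
      ∀ p ∈ Γ, φ p.1 + ψ p.2 = c p := by
  have := hs.to_subtype
  set φ := rockafellarPotential c Γ
  have hle (x : X) (hx : x ∈ s) (y : Y) : φ x + ⨅ x' : s, (c (x', y) - φ x') ≤ c (x, y) := by
    have := ciInf_le (Set.finite_range fun x' : s => c (x', y) - φ x').bddBelow ⟨x, hx⟩
    linarith
  refine ⟨φ, fun y => ⨅ x : s, (c (x, y) - φ x), hle,
    fun p hp => le_antisymm (hle _ (hΓs p hp) _) ?_⟩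
  have : Nonempty s := ⟨⟨p.1, hΓs p hp⟩⟩
  have : c p - φ p.1 ≤ ⨅ x : s, (c (x, p.2) - φ x) :=
    le_ciInf fun x => by linarith [h.rockafellarPotential_le hfin hp x]
  dsimp only
  linarith

end Rockafellar

/-- For finitely-supported marginals and a real-valued cost, a transport plan is optimal
if and only if it is concentrated on a `c`-cyclically monotone set. -/
theorem optimal_iff_cCyclicallyMonotone_of_finitelySupported
    {X Y : Type*}
    [TopologicalSpace X] [PolishSpace X] [MeasurableSpace X] [BorelSpace X]
    [TopologicalSpace Y] [PolishSpace Y] [MeasurableSpace Y] [BorelSpace Y]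
    (μ : Measure X) (ν : Measure Y) [IsProbabilityMeasure μ] [IsProbabilityMeasure ν]
    (hμ : ∃ S : Finset X, μ (↑S : Set X) = 1) (hν : ∃ T : Finset Y, ν (↑T : Set Y) = 1)
    (c : X × Y → ℝ)
    (γ : Measure (X × Y)) (hγ : IsCoupling μ ν γ) :
    (∀ γ' : Measure (X × Y), IsCoupling μ ν γ' → ∫ p, c p ∂γ ≤ ∫ p, c p ∂γ') ↔
      ∃ Γ : Set (X × Y), CCyclicallyMonotone c Γ ∧ γ Γ = 1 := by
  obtain ⟨S, hS⟩ := hμ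
  obtain ⟨T, hT⟩ := hν
  have hSae : ∀ᵐ x ∂μ, x ∈ S := mem_ae_iff.2 ((prob_compl_eq_zero_iff S.measurableSet).2 hS)
  have hTae : ∀ᵐ y ∂ν, y ∈ T := mem_ae_iff.2 ((prob_compl_eq_zero_iff T.measurableSet).2 hT)
  have hfin : (S ×ˢ T : Set (X × Y)).Finite := S.finite_toSet.prod T.finite_toSet
  have hK {γ' : Measure (X × Y)} (hγ' : IsCoupling μ ν γ') :
      ∀ᵐ p ∂γ', p ∈ (S ×ˢ T : Set (X × Y)) :=
    hγ'.ae_mem_prod hSae hTae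
  have hint {γ' : Measure (X × Y)} (hγ' : IsCoupling μ ν γ') : Integrable c γ' :=
    have := hγ'.isFiniteMeasure
    integrable_of_ae_mem_finite hfin (hK hγ') c
  have := hγ.isProbabilityMeasure
  constructor
  · intro hopt
    refine ⟨{p | γ {p} ≠ 0}, cCyclicallyMonotone_setOf_atoms_of_optimal hγ (hint hγ) hopt, ?_⟩
    have hatoms := ae_measure_singleton_ne_zero hfin.countable (hK hγ)
    rw [measure_congr (ae_eq_univ.2 (mem_ae_iff.1 hatoms)), measure_univ]
  · rintro ⟨Γ, hΓ, hγΓ⟩ γ' hγ'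
    have hΓfin : (Γ ∩ S ×ˢ T).Finite := hfin.subset inter_subset_right
    obtain ⟨φ, ψ, hle, heq⟩ := (hΓ.mono inter_subset_left).exists_potentials hΓfin
      S.finite_toSet fun p hp => hp.2.1
    have hγΓ' : ∀ᵐ p ∂γ, p ∈ Γ ∩ S ×ˢ T := by
      refine mem_ae_iff.2 ((prob_compl_eq_zero_iff hΓfin.measurableSet).2 ?_)
      rwa [measure_inter_conull (t := S ×ˢ T) (hK hγ)]
    exact hγ.integral_le_of_potentials hγ' (hint hγ')
      (integrable_of_ae_mem_finite S.finite_toSet hSae φ)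
      (integrable_of_ae_mem_finite T.finite_toSet hTae ψ)
      (hγΓ'.mono heq) ((hK hγ').mono fun p hp => hle p.1 hp.1 p.2)
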